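/- Let Δ : ℕ^(2) → ℕ be an infinite colouring (i.e., the image of Δ is infinite) and let n ≥ 2 be a natural number. Then there exists an n-tuple (X₁,...,Xₙ) of nonempty subsets of ℕ that is weakly homogeneous with respect to Δ. -/

import Mathlib

/-- The colour of the unordered edge `{x, y}` (only values on distinct pairs matter). -/
def edgeCol (Δ : ℕ → ℕ → ℕ) (x y : ℕ) : ℕ := Δ (min x y) (max x y)

/-- `colourSet Δ X` is the set of colours attained by `Δ` on edges with both endpoints in `X`. -/
def colourSet (Δ : ℕ → ℕ → ℕ) (X : Set ℕ) : Set ℕ :=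
  {c | ∃ x ∈ X, ∃ y ∈ X, x ≠ y ∧ edgeCol Δ x y = c}

/-- `N_Δ(v, X)`: the set of new colours from `v` into `X`, i.e. colours appearing on some
edge from `v` to `X` but on no edge inside `X`. -/
def newCols (Δ : ℕ → ℕ → ℕ) (v : ℕ) (X : Set ℕ) : Set ℕ :=
  {c | (∃ x ∈ X, x ≠ v ∧ edgeCol Δ v x = c) ∧ c ∉ colourSet Δ X}

/-- `X̄ᵢ = X₀ ∪ X₁ ∪ ⋯ ∪ Xᵢ` (0-indexed). -/
def barU (X : ℕ → Set ℕ) (i : ℕ) : Set ℕ := ⋃ j ≤ i, X j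

/-- The tuple `(X 0, …, X (n-1))` is weakly homogeneous with respect to `Δ` (0-indexed):
the sets are nonempty and pairwise disjoint; `X 0` is a singleton (so `Δ(X̄₀^(2)) = ∅`);
the colour sets of the partial unions form a strictly increasing chain; every vertex of
`X (i+1)` sees exactly the colours of `Δ(X̄ᵢ₊₁^(2)) \ Δ(X̄ᵢ^(2))` as new colours into `X̄ᵢ`;
and the full union spans at most `n(n-1)/2` colours. -/
def WeakHomog (Δ : ℕ → ℕ → ℕ) (n : ℕ) (X : ℕ → Set ℕ) : Prop :=
  (∀ i < n, (X i).Nonempty) ∧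
  (∀ i < n, ∀ j < n, i ≠ j → Disjoint (X i) (X j)) ∧
  ((∃ a : ℕ, X 0 = {a}) ∧ colourSet Δ (barU X 0) = ∅) ∧
  (∀ i, i + 1 < n → colourSet Δ (barU X i) ⊂ colourSet Δ (barU X (i + 1))) ∧
  (∀ i, i + 1 < n → ∀ v ∈ X (i + 1),
      newCols Δ v (barU X i) = colourSet Δ (barU X (i + 1)) \ colourSet Δ (barU X i)) ∧
  ((colourSet Δ (barU X (n - 1))).Finite ∧
    (colourSet Δ (barU X (n - 1))).ncard ≤ n * (n - 1) / 2)

/-!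
If some vertex `v` sees infinitely many colours, a star around `v` works: add vertices one at a
time, each joined to `v` by a colour that does not yet occur among the chosen vertices, and take
singletons.

Otherwise every palette is finite, and greedily there are pairs `{x k, y k}` whose colour is new
for the palettes of all earlier pair vertices. Along a non-principal ultrafilter the colour from a
vertex of pair `k` to the corresponding vertex of a later pair stabilises to some `A k p p'`. If one
of the four functions `A · p p'` is not eventually constant, a star around a late pair vertex works
again, choosing pairs whose `A`-values are new. If all four are eventually constant, then along a
subsequence every cross colour is a constant `C p p'`, and `{x 0}, {y 0}, {x 1, …, x (n-2)}, {y 1},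
{y 2}, …` is weakly homogeneous: each `x k` of the block brings exactly the colours `C p false`,
and each later `y k` brings its own pair colour plus at most two of the constants.
-/

open Set Filter

theorem exists_seq_forall_image_Iio {α : Type*} {Q : Set α → α → Prop}
    (h : ∀ S : Set α, S.Finite → ∃ y, Q S y) : ∃ f : ℕ → α, ∀ m, Q (f '' Iio m) (f m) := by
  classical
  choose g hg using fun S : Finset α => h (S : Set α) S.finite_toSet
  obtain ⟨S, hS0, hS_succ⟩ : ∃ S : ℕ → Finset α,
      S 0 = ∅ ∧ ∀ m, S (m + 1) = insert (g (S m)) (S m) :=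
    ⟨fun m => Nat.rec ∅ (fun _ S => insert (g S) S) m, rfl, fun _ => rfl⟩
  have hS : ∀ m, (S m : Set α) = (fun k => g (S k)) '' Iio m := by
    intro m
    induction m with
    | zero => simp [hS0]
    | succ m ih =>
      rw [Iio_add_one_eq_Iic, ← Iio_insert, image_insert_eq, ← ih, hS_succ, Finset.coe_insert]
  exact ⟨fun m => g (S m), fun m => by rw [← hS m]; exact hg (S m)⟩

theorem Filter.exists_seq_forall_of_eventually {α : Type*} {L : Filter α} [L.NeBot]
    {P : α → Prop} {r : α → α → Prop} (hP : ∀ᶠ y in L, P y) (hr : ∀ x, ∀ᶠ y in L, r x y) :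
    ∃ f : ℕ → α, (∀ n, P (f n)) ∧ ∀ m n, m < n → r (f m) (f n) :=
  exists_seq_of_forall_finset_exists P r fun s _ =>
    (hP.and ((eventually_all_finset s).2 fun x _ => hr x)).exists

theorem Ultrafilter.exists_eventually_eq_of_finite {α β : Type*} {U : Ultrafilter α} {f : α → β}
    {s : Set β} (hs : s.Finite) (hf : ∀ᶠ x in U, f x ∈ s) : ∃ b, ∀ᶠ x in U, f x = b := by
  obtain ⟨b, -, hb⟩ := (U.map f).eq_pure_of_finite_mem hs (Ultrafilter.mem_map.2 hf)
  exact ⟨b, Ultrafilter.mem_map.1 (hb ▸ rfl : ({b} : Set β) ∈ U.map f)⟩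

section ColourSets

variable {Δ : ℕ → ℕ → ℕ} {S T B : Set ℕ} {v : ℕ}

def palette (Δ : ℕ → ℕ → ℕ) (v : ℕ) : Set ℕ := {c | ∃ u, u ≠ v ∧ edgeCol Δ v u = c}

theorem edgeCol_comm (Δ : ℕ → ℕ → ℕ) (x y : ℕ) : edgeCol Δ x y = edgeCol Δ y x := by
  rw [edgeCol, edgeCol, min_comm, max_comm]

theorem colourSet_mono (h : S ⊆ T) : colourSet Δ S ⊆ colourSet Δ T := by
  rintro _ ⟨x, hx, y, hy, hxy, rfl⟩
  exact ⟨x, h hx, y, h hy, hxy, rfl⟩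

@[simp]
theorem colourSet_singleton (a : ℕ) : colourSet Δ {a} = ∅ :=
  eq_empty_of_forall_notMem fun _ ⟨_, hx, _, hy, hxy, _⟩ => hxy (hx.trans hy.symm)

theorem colourSet_pair {a b : ℕ} (hab : a ≠ b) : colourSet Δ {a, b} = {edgeCol Δ a b} := by
  refine Subset.antisymm ?_ fun c hc => ⟨a, by simp, b, by simp, hab, hc.symm⟩
  rintro _ ⟨x, hx, y, hy, hxy, rfl⟩
  rcases hx with rfl | rfl <;> rcases hy with rfl | rfl
  exacts [absurd rfl hxy, rfl, edgeCol_comm Δ _ _, absurd rfl hxy]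

theorem Set.Finite.colourSet (hS : S.Finite) : (colourSet Δ S).Finite :=
  (hS.image2 (edgeCol Δ) hS).subset fun _ ⟨x, hx, y, hy, _, hc⟩ => ⟨x, hx, y, hy, hc⟩

theorem notMem_of_newCols_nonempty (h : (newCols Δ v S).Nonempty) : v ∉ S := by
  obtain ⟨_, ⟨x, hx, hxv, rfl⟩, hc⟩ := h
  exact fun hv => hc ⟨v, hv, x, hx, hxv.symm, rfl⟩

theorem encard_newCols_le : (newCols Δ v S).encard ≤ S.encard := by
  refine (encard_le_encard ?_).trans (encard_image_le (edgeCol Δ v) S)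
  rintro _ ⟨⟨x, hx, -, rfl⟩, -⟩
  exact mem_image_of_mem _ hx

def HomogStep (Δ : ℕ → ℕ → ℕ) (S B : Set ℕ) (k : ℕ) : Prop :=
  ∃ N : Set ℕ, N.Nonempty ∧ N.encard ≤ k ∧ (∀ v ∈ B, newCols Δ v S = N) ∧
    colourSet Δ B ⊆ N ∪ colourSet Δ S

theorem homogStep_singleton {k : ℕ} (h : (newCols Δ v S).Nonempty)
    (hk : (newCols Δ v S).encard ≤ k) : HomogStep Δ S {v} k :=
  ⟨_, h, hk, fun _ hx => hx ▸ rfl, by simp⟩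

namespace HomogStep

variable {k : ℕ} (h : HomogStep Δ S B k)
include h

theorem newCols_eq (hv : v ∈ B) : newCols Δ v S = colourSet Δ (S ∪ B) \ colourSet Δ S := by
  obtain ⟨N, -, -, hN, hB⟩ := h
  ext c
  constructor
  · rintro ⟨⟨x, hx, hxv, rfl⟩, hc⟩
    exact ⟨⟨v, Or.inr hv, x, Or.inl hx, hxv.symm, rfl⟩, hc⟩
  · rintro ⟨⟨x, hx, y, hy, hxy, rfl⟩, hc⟩
    rw [hN v hv]
    rcases hx with hx | hx <;> rcases hy with hy | hy
    · exact absurd ⟨x, hx, y, hy, hxy, rfl⟩ hc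
    · rw [← hN y hy]
      exact ⟨⟨x, hx, hxy, edgeCol_comm Δ y x⟩, hc⟩
    · rw [← hN x hx]
      exact ⟨⟨y, hy, hxy.symm, rfl⟩, hc⟩
    · exact (hB ⟨x, hx, y, hy, hxy, rfl⟩).resolve_right hc

theorem newCols_nonempty (hv : v ∈ B) : (newCols Δ v S).Nonempty := by
  obtain ⟨N, hNne, -, hN, -⟩ := h
  exact hN v hv ▸ hNne

theorem notMem (hv : v ∈ B) : v ∉ S :=
  notMem_of_newCols_nonempty (h.newCols_nonempty hv)

theorem colourSet_ssubset (hB : B.Nonempty) : colourSet Δ S ⊂ colourSet Δ (S ∪ B) := by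
  obtain ⟨v, hv⟩ := hB
  obtain ⟨c, hc, hcS⟩ := h.newCols_eq hv ▸ h.newCols_nonempty hv
  exact (ssubset_iff_of_subset (colourSet_mono subset_union_left)).2 ⟨c, hc, hcS⟩

theorem encard_colourSet_le (hB : B.Nonempty) :
    (colourSet Δ (S ∪ B)).encard ≤ (colourSet Δ S).encard + k := by
  obtain ⟨v, hv⟩ := hB
  rw [← union_sdiff_cancel (colourSet_mono subset_union_left), ← h.newCols_eq hv]
  obtain ⟨N, -, hk, hN, -⟩ := h
  exact (encard_union_le _ _).trans (add_le_add le_rfl (hN v hv ▸ hk))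

end HomogStep

end ColourSets

section Tuples

variable {Δ : ℕ → ℕ → ℕ}

theorem barU_zero (X : ℕ → Set ℕ) : barU X 0 = X 0 := by
  simp [barU]

theorem barU_succ (X : ℕ → Set ℕ) (i : ℕ) : barU X (i + 1) = barU X i ∪ X (i + 1) := by
  simp only [barU, Nat.le_succ_iff_eq_or_le]
  ext
  simp [or_comm]

theorem subset_barU (X : ℕ → Set ℕ) {i j : ℕ} (h : i ≤ j) : X i ⊆ barU X j :=
  subset_biUnion_of_mem (u := X) h

/-- The bound `i + 1` on the number of new colours at step `i` adds up to the bound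
`n (n - 1) / 2` of the definition. -/
theorem weakHomog_of_homogStep {X : ℕ → Set ℕ} {n a : ℕ} (h0 : X 0 = {a})
    (hX : ∀ i < n, (X i).Nonempty)
    (hstep : ∀ i, i + 1 < n → HomogStep Δ (barU X i) (X (i + 1)) (i + 1)) :
    WeakHomog Δ n X := by
  have hdisj : ∀ i j, i < j → j < n → Disjoint (X i) (X j) := by
    intro i j hij hj
    obtain ⟨j, rfl⟩ := Nat.exists_eq_add_of_lt hij
    exact disjoint_left.2 fun v hvi hvj =>
      (hstep (i + j) (by omega)).notMem hvj (subset_barU X (by omega) hvi)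
  have hcard : ∀ i, i ≤ n - 1 →
      (colourSet Δ (barU X i)).encard ≤ ((∑ j ∈ Finset.range (i + 1), j : ℕ) : ℕ∞) := by
    intro i hi
    induction i with
    | zero => simp [barU_zero, h0]
    | succ i ih =>
      rw [barU_succ, Finset.sum_range_succ, Nat.cast_add]
      exact ((hstep i (by omega)).encard_colourSet_le (hX _ (by omega))).trans
        (add_le_add (ih (by omega)) le_rfl)
  refine ⟨hX, fun i hi j hj hij => ?_, ⟨⟨a, h0⟩, by simp [barU_zero, h0]⟩, fun i hi => ?_,
    fun i hi v hv => ?_, ?_⟩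
  · rcases hij.lt_or_gt with h | h
    exacts [hdisj i j h hj, (hdisj j i h hi).symm]
  · rw [barU_succ]
    exact (hstep i hi).colourSet_ssubset (hX _ hi)
  · rw [barU_succ]
    exact (hstep i hi).newCols_eq hv
  · have hsum : ∑ j ∈ Finset.range (n - 1 + 1), j = n * (n - 1) / 2 := by
      rcases n with _ | n
      · rfl
      · simp [Finset.sum_range_id]
    have h := hcard (n - 1) le_rfl
    rw [hsum] at h
    have hfin := finite_of_encard_le_coe h
    exact ⟨hfin, by rw [← hfin.cast_ncard_eq] at h; exact_mod_cast h⟩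

end Tuples

section Hub

variable {Δ : ℕ → ℕ → ℕ}

def hubTuple (t : ℕ) (s : ℕ → ℕ) : ℕ → Set ℕ
  | 0 => {t}
  | i + 1 => {s i}

theorem barU_hubTuple (t : ℕ) (s : ℕ → ℕ) (i : ℕ) :
    barU (hubTuple t s) i = insert t (s '' Iio i) := by
  induction i with
  | zero => simp [barU_zero, hubTuple]
  | succ i ih =>
    rw [barU_succ, ih, Iio_add_one_eq_Iic, ← Iio_insert, image_insert_eq]
    ext
    simp [hubTuple, or_left_comm]

theorem weakHomog_hubTuple {n : ℕ} (t : ℕ) (s : ℕ → ℕ)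
    (h : ∀ i, i + 1 < n → (newCols Δ (s i) (insert t (s '' Iio i))).Nonempty) :
    WeakHomog Δ n (hubTuple t s) := by
  refine weakHomog_of_homogStep rfl (fun i _ => by cases i <;> simp [hubTuple]) fun i hi => ?_
  rw [barU_hubTuple]
  refine homogStep_singleton (h i hi) (encard_newCols_le.trans ?_)
  calc (insert t (s '' Iio i)).encard ≤ (s '' Iio i).encard + 1 := encard_insert_le _ _
    _ ≤ (Iio i).encard + 1 := add_le_add (encard_image_le s _) le_rfl
    _ = i + 1 := by rw [← (finite_Iio i).cast_ncard_eq, ncard_Iio_nat]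

theorem exists_weakHomog_of_palette_infinite {v : ℕ} (hv : (palette Δ v).Infinite) (n : ℕ) :
    ∃ X, WeakHomog Δ n X := by
  obtain ⟨s, hs⟩ := exists_seq_forall_image_Iio
    (Q := fun S y => y ≠ v ∧ edgeCol Δ v y ∉ colourSet Δ (insert v S)) fun S hS => by
      obtain ⟨_, ⟨y, hyv, rfl⟩, hc⟩ := (hv.sdiff (hS.insert v).colourSet).nonempty
      exact ⟨y, hyv, hc⟩
  exact ⟨_, weakHomog_hubTuple v s fun i _ =>
    ⟨_, ⟨v, mem_insert _ _, (hs i).1.symm, edgeCol_comm Δ _ _⟩, (hs i).2⟩⟩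

theorem exists_weakHomog_of_broadcast {s t c d : ℕ → ℕ} (hst : ∀ k l, k < l → s k ≠ t l)
    (hc : ∀ k l, k < l → edgeCol Δ (s k) (t l) = c k)
    (hd : ∀ k l, k < l → edgeCol Δ (s k) (s l) = d k)
    (hcd : ∀ k l, k < l → c l ≠ c k ∧ c l ≠ d k) (n : ℕ) : ∃ X, WeakHomog Δ n X := by
  refine ⟨_, weakHomog_hubTuple (t (n - 1)) s fun i hi =>
    ⟨c i, ⟨t (n - 1), mem_insert _ _, (hst i _ (by omega)).symm, hc i _ (by omega)⟩, ?_⟩⟩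
  rintro ⟨x, hx, y, hy, hxy, hcol⟩
  rcases hx with rfl | ⟨j, hj, rfl⟩ <;> rcases hy with rfl | ⟨k, hk, rfl⟩
  · exact hxy rfl
  · rw [edgeCol_comm, hc k _ (by simp at hk; omega)] at hcol
    exact (hcd k i hk).1 hcol.symm
  · rw [hc j _ (by simp at hj; omega)] at hcol
    exact (hcd j i hj).1 hcol.symm
  · rcases lt_trichotomy j k with hjk | rfl | hjk
    · rw [hd j k hjk] at hcol
      exact (hcd j i hj).2 hcol.symm
    · exact hxy rfl
    · rw [edgeCol_comm, hd k j hjk] at hcol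
      exact (hcd k i hk).2 hcol.symm

end Hub

section PairSystem

variable {Δ : ℕ → ℕ → ℕ} {z : ℕ → Bool → ℕ} {C : Bool → Bool → ℕ}

def pairCol (Δ : ℕ → ℕ → ℕ) (z : ℕ → Bool → ℕ) (k : ℕ) : ℕ := edgeCol Δ (z k false) (z k true)

theorem edgeCol_eq_pairCol {k : ℕ} {p p' : Bool} (h : p ≠ p') :
    edgeCol Δ (z k p) (z k p') = pairCol Δ z k := by
  cases p <;> cases p' <;> simp_all [pairCol, edgeCol_comm Δ (z k true)]

structure IsPairSystem (Δ : ℕ → ℕ → ℕ) (z : ℕ → Bool → ℕ) (C : Bool → Bool → ℕ) : Prop where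
  ne : ∀ k, z k false ≠ z k true
  cross : ∀ k l, k < l → ∀ p p', edgeCol Δ (z k p) (z l p') = C p p'
  pairCol_ne : ∀ k p p', pairCol Δ z k ≠ C p p'
  pairCol_injective : Function.Injective (pairCol Δ z)

def pairTuple (z : ℕ → Bool → ℕ) (n : ℕ) : ℕ → Set ℕ
  | 0 => {z 0 false}
  | 1 => {z 0 true}
  | 2 => (z · false) '' Icc 1 (n - 2)
  | i + 3 => {z (i + 1) true}

theorem barU_pairTuple_one (z : ℕ → Bool → ℕ) (n : ℕ) :
    barU (pairTuple z n) 1 = {z 0 false, z 0 true} := by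
  rw [barU_succ, barU_zero]
  ext
  simp [pairTuple, or_comm]

theorem barU_pairTuple_subset (z : ℕ → Bool → ℕ) (n i : ℕ) :
    barU (pairTuple z n) (i + 2) ⊆ Function.uncurry z '' {x | x.2 = true → x.1 ≤ i} := by
  refine iUnion₂_subset fun j hj => ?_
  match j with
  | 0 => exact singleton_subset_iff.2 ⟨(0, false), by simp, rfl⟩
  | 1 => exact singleton_subset_iff.2 ⟨(0, true), by simp, rfl⟩
  | 2 =>
    rintro _ ⟨k, -, rfl⟩
    exact ⟨(k, false), by simp, rfl⟩
  | j + 3 => exact singleton_subset_iff.2 ⟨(j + 1, true), by simp; omega, rfl⟩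

namespace IsPairSystem

variable (hz : IsPairSystem Δ z C)
include hz

theorem edgeCol_cases {k l : ℕ} {p p' : Bool} (h : z k p ≠ z l p') :
    edgeCol Δ (z k p) (z l p') = C p p' ∨ edgeCol Δ (z k p) (z l p') = C p' p ∨
      k = l ∧ edgeCol Δ (z k p) (z l p') = pairCol Δ z k := by
  rcases lt_trichotomy k l with hkl | rfl | hkl
  · exact Or.inl (hz.cross k l hkl p p')
  · exact Or.inr (Or.inr ⟨rfl, edgeCol_eq_pairCol fun hp => h (hp ▸ rfl)⟩)
  · exact Or.inr (Or.inl (by rw [edgeCol_comm]; exact hz.cross l k hkl p' p))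

theorem ne_of_lt {k l : ℕ} (hkl : k < l) (p p' : Bool) : z k p ≠ z l p' := by
  intro h
  have := hz.cross k l hkl p (!p')
  rw [h, edgeCol_eq_pairCol (by cases p' <;> simp)] at this
  exact hz.pairCol_ne l p (!p') this

theorem pairCol_notMem_colourSet {T : Set (ℕ × Bool)} {m : ℕ} (hm : (m, true) ∉ T) :
    pairCol Δ z m ∉ colourSet Δ (Function.uncurry z '' T) := by
  rintro ⟨_, ⟨⟨k, p⟩, hk, rfl⟩, _, ⟨⟨l, p'⟩, hl, rfl⟩, hne, hcol⟩
  rcases hz.edgeCol_cases hne with h | h | ⟨rfl, h⟩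
  · exact hz.pairCol_ne m p p' (hcol.symm.trans h)
  · exact hz.pairCol_ne m p' p (hcol.symm.trans h)
  · obtain rfl := hz.pairCol_injective (h.symm.trans hcol)
    cases p <;> cases p' <;> simp_all

theorem newCols_subset {S : Set ℕ} (hS : S ⊆ range (Function.uncurry z))
    (hb : C true false ∈ colourSet Δ S) (k : ℕ) :
    newCols Δ (z k true) S ⊆ {C false true, C true true, pairCol Δ z k} := by
  rintro _ ⟨⟨_, hx, hxv, rfl⟩, hc⟩
  obtain ⟨⟨l, p⟩, rfl⟩ := hS hx
  simp only [Function.uncurry_apply_pair] at hxv hc ⊢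
  rcases hz.edgeCol_cases (Ne.symm hxv) with h | h | ⟨-, h⟩ <;> rw [h] <;> cases p <;> simp_all

theorem homogStep_block (m : ℕ) :
    HomogStep Δ {z 0 false, z 0 true} ((z · false) '' Icc 1 m) 2 := by
  have h01 : colourSet Δ {z 0 false, z 0 true} = {pairCol Δ z 0} := colourSet_pair (hz.ne 0)
  refine ⟨{C false false, C true false}, insert_nonempty _ _, ?_, ?_, ?_⟩
  · rw [← Finset.coe_pair, encard_coe_eq_coe_finsetCard]
    exact_mod_cast Finset.card_le_two
  · rintro _ ⟨k, hk, rfl⟩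
    have hk0 : 0 < k := hk.1
    have hC : ∀ p, C p false ∈ newCols Δ (z k false) {z 0 false, z 0 true} := fun p =>
      ⟨⟨z 0 p, by cases p <;> simp, hz.ne_of_lt hk0 p false,
        by rw [edgeCol_comm, hz.cross 0 k hk0]⟩, by rw [h01]; exact (hz.pairCol_ne 0 p false).symm⟩
    ext c
    constructor
    · rintro ⟨⟨x, hx, -, rfl⟩, -⟩
      rcases hx with rfl | rfl <;> rw [edgeCol_comm, hz.cross 0 k hk0] <;> simp
    · rintro (rfl | rfl)
      exacts [hC false, hC true]
  · rintro _ ⟨_, ⟨k, -, rfl⟩, _, ⟨l, -, rfl⟩, hne, rfl⟩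
    refine Or.inl (Or.inl ?_)
    rcases hz.edgeCol_cases hne with h | h | ⟨rfl, -⟩
    exacts [h, h, absurd rfl hne]

theorem weakHomog (n : ℕ) : WeakHomog Δ n (pairTuple z n) := by
  refine weakHomog_of_homogStep rfl (fun i hi => ?_) fun i hi => ?_
  · match i with
    | 0 | 1 | i + 3 => simp [pairTuple]
    | 2 => exact ⟨_, 1, ⟨le_rfl, by omega⟩, rfl⟩
  · match i with
    | 0 =>
      rw [barU_zero]
      exact homogStep_singleton ⟨pairCol Δ z 0, ⟨z 0 false, rfl, hz.ne 0, edgeCol_comm Δ _ _⟩,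
        by simp [pairTuple]⟩ (encard_newCols_le.trans (by simp [pairTuple]))
    | 1 =>
      rw [barU_pairTuple_one]
      exact hz.homogStep_block _
    | i + 2 =>
      have hS := barU_pairTuple_subset z n i
      have hu : z (i + 1) false ∈ barU (pairTuple z n) (i + 2) :=
        subset_barU _ (by omega : 2 ≤ i + 2) ⟨i + 1, ⟨by omega, by omega⟩, rfl⟩
      have hb : C true false ∈ colourSet Δ (barU (pairTuple z n) (i + 2)) :=
        ⟨z 0 true, subset_barU _ (by omega : 1 ≤ i + 2) rfl,
          z 1 false, subset_barU _ (by omega : 2 ≤ i + 2) ⟨1, ⟨le_rfl, by omega⟩, rfl⟩,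
          hz.ne_of_lt one_pos _ _, hz.cross 0 1 one_pos _ _⟩
      refine homogStep_singleton ⟨pairCol Δ z (i + 1),
        ⟨_, hu, hz.ne (i + 1), edgeCol_comm Δ _ _⟩, fun h => ?_⟩ ?_
      · exact hz.pairCol_notMem_colourSet (by simp) (colourSet_mono hS h)
      · refine (encard_le_encard
          (hz.newCols_subset (hS.trans (image_subset_range _ _)) hb _)).trans ?_
        rw [← Finset.coe_pair, ← Finset.coe_insert, encard_coe_eq_coe_finsetCard]
        exact_mod_cast Finset.card_le_three.trans (by omega)

end IsPairSystem
end PairSystem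

section FreshPairs

variable {Δ : ℕ → ℕ → ℕ} {z : ℕ → Bool → ℕ}

theorem mem_palette {u v : ℕ} (h : u ≠ v) : edgeCol Δ v u ∈ palette Δ v := ⟨u, h, rfl⟩

theorem pairCol_mem_palette {k : ℕ} (h : z k false ≠ z k true) (p : Bool) :
    pairCol Δ z k ∈ palette Δ (z k p) := by
  cases p
  · exact mem_palette h.symm
  · exact ⟨z k false, h, edgeCol_comm Δ _ _⟩

structure IsFreshPairs (Δ : ℕ → ℕ → ℕ) (z : ℕ → Bool → ℕ) : Prop where
  ne : ∀ k, z k false ≠ z k true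
  fresh : ∀ k l, k < l → ∀ p, pairCol Δ z l ∉ palette Δ (z k p)

theorem exists_isFreshPairs (hΔ : (colourSet Δ univ).Infinite)
    (hpal : ∀ v, (palette Δ v).Finite) : ∃ z, IsFreshPairs Δ z := by
  obtain ⟨z, hne, hfresh⟩ := exists_seq_of_forall_finset_exists
    (fun f : Bool → ℕ => f false ≠ f true)
    (fun f g => ∀ p, edgeCol Δ (g false) (g true) ∉ palette Δ (f p)) fun s _ => by
      have hF : (⋃ f ∈ s, ⋃ p, palette Δ (f p)).Finite :=
        s.finite_toSet.biUnion fun f _ => finite_iUnion fun p => hpal (f p)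
      obtain ⟨_, ⟨x, -, y, -, hxy, rfl⟩, hc⟩ := (hΔ.sdiff hF).nonempty
      exact ⟨fun p => cond p y x, hxy, fun f hf p hp =>
        hc (mem_biUnion (Finset.mem_coe.2 hf) (mem_iUnion.2 ⟨p, hp⟩))⟩
  exact ⟨z, ⟨hne, hfresh⟩⟩

namespace IsFreshPairs

variable (hz : IsFreshPairs Δ z)
include hz

theorem ne_of_lt {k l : ℕ} (hkl : k < l) (p p' : Bool) : z k p ≠ z l p' := fun h =>
  hz.fresh k l hkl p (h ▸ pairCol_mem_palette (hz.ne l) p')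

theorem pairCol_injective : Function.Injective (pairCol Δ z) :=
  Function.injective_iff_pairwise_ne.2 <| Pairwise.of_lt fun k l hkl h =>
    hz.fresh k l hkl false (h ▸ pairCol_mem_palette (hz.ne k) false)

theorem comp {e : ℕ → ℕ} (he : StrictMono e) : IsFreshPairs Δ (fun k => z (e k)) :=
  ⟨fun k => hz.ne (e k), fun k l hkl => hz.fresh (e k) (e l) (he hkl)⟩

/-- Dropping the first pair, whose palettes contain every value of `C`. -/
theorem isPairSystem {C : Bool → Bool → ℕ}
    (hC : ∀ k l, k < l → ∀ p p', edgeCol Δ (z k p) (z l p') = C p p') :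
    IsPairSystem Δ (fun k => z (k + 1)) C where
  ne k := hz.ne (k + 1)
  cross k l hkl := hC (k + 1) (l + 1) (by omega)
  pairCol_ne k p p' h := hz.fresh 0 (k + 1) (by omega) p
    (h ▸ hC 0 1 one_pos p p' ▸ mem_palette (hz.ne_of_lt one_pos p p').symm)
  pairCol_injective := hz.pairCol_injective.comp (add_left_injective 1)

theorem exists_eventually_edgeCol_eq (hpal : ∀ v, (palette Δ v).Finite) {U : Ultrafilter ℕ}
    (hU : (U : Filter ℕ) ≤ atTop) (k : ℕ) (p p' : Bool) :
    ∃ c, ∀ᶠ l in U, edgeCol Δ (z k p) (z l p') = c :=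
  Ultrafilter.exists_eventually_eq_of_finite (hpal (z k p)) <|
    ((eventually_gt_atTop k).filter_mono hU).mono fun _ hl =>
      mem_palette (hz.ne_of_lt hl p p').symm

variable {L : Filter ℕ} [L.NeBot] (hL : L ≤ atTop) {A : ℕ → Bool → Bool → ℕ}
  (hA : ∀ k p p', ∀ᶠ l in L, edgeCol Δ (z k p) (z l p') = A k p p')
include hL hA

theorem exists_weakHomog_of_eventually_eq {C : Bool → Bool → ℕ}
    (hC : ∀ p p', ∀ᶠ k in L, A k p p' = C p p') (n : ℕ) : ∃ X, WeakHomog Δ n X := by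
  obtain ⟨e, heC, he⟩ := exists_seq_forall_of_eventually
    (P := fun k => ∀ p p', A k p p' = C p p')
    (r := fun k l => k < l ∧ ∀ p p', edgeCol Δ (z k p) (z l p') = A k p p')
    (eventually_all.2 fun p => eventually_all.2 (hC p))
    fun k => ((eventually_gt_atTop k).filter_mono hL).and
      (eventually_all.2 fun p => eventually_all.2 (hA k p))
  have hmono : StrictMono e := fun k l hkl => (he k l hkl).1
  refine ⟨_, ((hz.comp hmono).isPairSystem (C := C) fun k l hkl p p' => ?_).weakHomog n⟩
  rw [(he k l hkl).2, heC]

theorem exists_weakHomog_of_eventually_ne {p p' : Bool} (hne : ∀ c, ∀ᶠ k in L, A k p p' ≠ c)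
    (n : ℕ) : ∃ X, WeakHomog Δ n X := by
  obtain ⟨e, -, he⟩ := exists_seq_forall_of_eventually (P := fun _ => True)
    (r := fun k l => k < l ∧ edgeCol Δ (z k p) (z l p') = A k p p' ∧
      edgeCol Δ (z k p) (z l p) = A k p p ∧ A l p p' ≠ A k p p' ∧ A l p p' ≠ A k p p)
    (Eventually.of_forall fun _ => trivial) fun k =>
      ((eventually_gt_atTop k).filter_mono hL).and <|
        (hA k p p').and <| (hA k p p).and <| (hne _).and (hne _)
  exact exists_weakHomog_of_broadcast (fun k l hkl => hz.ne_of_lt (he k l hkl).1 p p')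
    (fun k l hkl => (he k l hkl).2.1) (fun k l hkl => (he k l hkl).2.2.1)
    (fun k l hkl => (he k l hkl).2.2.2) n

end IsFreshPairs

theorem exists_weakHomog_of_forall_palette_finite (hΔ : (colourSet Δ univ).Infinite)
    (hpal : ∀ v, (palette Δ v).Finite) (n : ℕ) : ∃ X, WeakHomog Δ n X := by
  obtain ⟨z, hz⟩ := exists_isFreshPairs hΔ hpal
  have hU : ↑(hyperfilter ℕ) ≤ (atTop : Filter ℕ) :=
    hyperfilter_le_cofinite.trans Nat.cofinite_eq_atTop.le
  choose A hA using hz.exists_eventually_edgeCol_eq hpal hU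
  by_cases hconst : ∀ p p', ∃ c, ∀ᶠ k in hyperfilter ℕ, A k p p' = c
  · choose C hC using hconst
    exact hz.exists_weakHomog_of_eventually_eq hU hA hC n
  · push Not at hconst
    obtain ⟨p, p', hp⟩ := hconst
    exact hz.exists_weakHomog_of_eventually_ne hU hA hp n

end FreshPairs

theorem exists_weakly_homogeneous_general (Δ : ℕ → ℕ → ℕ)
    (hΔ : (colourSet Δ Set.univ).Infinite) (n : ℕ) :
    ∃ X : ℕ → Set ℕ, WeakHomog Δ n X := by
  by_cases hpal : ∀ v, (palette Δ v).Finite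
  · exact exists_weakHomog_of_forall_palette_finite hΔ hpal n
  · push Not at hpal
    obtain ⟨v, hv⟩ := hpal
    exact exists_weakHomog_of_palette_infinite hv n

/-- **Theorem 8.** For every infinite colouring `Δ : ℕ^(2) → ℕ` and every `n ≥ 2`,
there exists an `n`-tuple that is weakly homogeneous with respect to `Δ`. -/
theorem exists_weakly_homogeneous (Δ : ℕ → ℕ → ℕ)
    (hΔ : (colourSet Δ Set.univ).Infinite) (n : ℕ) (hn : 2 ≤ n) :
    ∃ X : ℕ → Set ℕ, WeakHomog Δ n X :=
  exists_weakly_homogeneous_general Δ hΔ n
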